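/- arXiv:1812.03162 — 2 statements merged into one kernel-verified Lean document; each statement's English description precedes it below -/
import Mathlib

section
/- For n ≥ 1, the partition p' = ((2n+1), (2n−1), 1, 1, 1) strictly dominates p = ((2n), (2n), 1, 1, 1) in the dominance order on partitions of 4n+3, and moreover p' is the smallest special orthogonal partition of 4n+3 dominating p: any special orthogonal partition q of 4n+3 with q ≥ p in the dominance order satisfies q ≥ p'. -/
/-- A partition (list of parts) is orthogonal if every even part occurs with
even multiplicity. -/
def IsOrthogonalPartition (p : List ℕ) : Prop :=
  ∀ k : ℕ, Even k → Even (p.count k)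

/-- An orthogonal partition is special if (i) between any two consecutive even
parts there is an even number of odd parts, and (ii) the number of odd parts
greater than the largest even part is odd; if there are no even parts, the
total number of (odd) parts must be odd. -/
def IsSpecialOrthogonalPartition (p : List ℕ) : Prop :=
  IsOrthogonalPartition p ∧
  (∀ a b : ℕ, a ∈ p → b ∈ p → Even a → Even b → b < a →
    (∀ c ∈ p, Even c → ¬(b < c ∧ c < a)) →
    Even (p.countP (fun m => decide (Odd m ∧ b < m ∧ m < a)))) ∧
  (∀ a : ℕ, a ∈ p → Even a → (∀ c ∈ p, Even c → c ≤ a) →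
    Odd (p.countP (fun m => decide (Odd m ∧ a < m)))) ∧
  ((∀ a ∈ p, Odd a) → Odd p.length)

/-- Dominance order: `Dominates q p` means every partial sum of `p` is bounded
by the corresponding partial sum of `q` (i.e. `p ≤ q`). -/
def Dominates (q p : List ℕ) : Prop :=
  ∀ k : ℕ, (p.take k).sum ≤ (q.take k).sum

/-!
The partial sums of `(2n+1, 2n-1, 1, 1, 1)` and `(2n, 2n, 1, 1, 1)` differ only in the first
one, so a partition dominating the latter dominates the former as soon as its largest part
exceeds `2n`. In a special orthogonal partition the largest part is odd: were it even, it would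
be the largest even part with no odd part above it, while specialness asks for an odd number of
such odd parts. A largest part `≥ 2n` is therefore `≥ 2n + 1`.
-/

theorem Dominates.refl (p : List ℕ) : Dominates p p := fun _ => le_rfl

theorem Dominates.cons_cons {q l : List ℕ} {a b a' b' : ℕ} (hdom : Dominates q (a :: b :: l))
    (hab : a' + b' = a + b) (ha' : a' ≤ (q.take 1).sum) : Dominates q (a' :: b' :: l) := by
  rintro (_ | _ | k)
  · simp
  · simpa using ha'
  · have hk := hdom (k + 1 + 1)
    simp only [List.take_succ_cons, List.sum_cons] at hk ⊢
    omega

theorem IsSpecialOrthogonalPartition.odd_of_forall_le {p : List ℕ} {a : ℕ}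
    (hspec : IsSpecialOrthogonalPartition p) (ha : a ∈ p) (hmax : ∀ c ∈ p, c ≤ a) : Odd a := by
  by_contra hodd
  have heven : Even a := Nat.not_odd_iff_even.mp hodd
  have hnone : p.countP (fun m => decide (Odd m ∧ a < m)) = 0 :=
    List.countP_eq_zero.mpr fun m hm => by simpa using fun _ => hmax m hm
  exact Nat.not_odd_zero (hnone ▸ hspec.2.2.1 a ha heven fun c hc _ => hmax c hc)

/-- For `n ≥ 1`, `p' = ((2n+1), (2n−1), 1, 1, 1)` strictly
dominates `p = ((2n), (2n), 1, 1, 1)` in the dominance order on partitions of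
`4n+3`, and `p'` is the smallest special orthogonal partition of `4n+3`
dominating `p`. -/
theorem stmt5 (n : ℕ) (hn : 1 ≤ n) :
    Dominates [2 * n + 1, 2 * n - 1, 1, 1, 1] [2 * n, 2 * n, 1, 1, 1] ∧
    [2 * n + 1, 2 * n - 1, 1, 1, 1] ≠ [2 * n, 2 * n, 1, 1, 1] ∧
    (∀ q : List ℕ, q.Pairwise (· ≥ ·) → (∀ a ∈ q, 0 < a) → q.sum = 4 * n + 3 →
      IsSpecialOrthogonalPartition q →
      Dominates q [2 * n, 2 * n, 1, 1, 1] →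
      Dominates q [2 * n + 1, 2 * n - 1, 1, 1, 1]) := by
  have hsum : 2 * n + 1 + (2 * n - 1) = 2 * n + 2 * n := by omega
  refine ⟨(Dominates.refl _).cons_cons hsum.symm (by simp), by simp, ?_⟩
  rintro (_ | ⟨a, t⟩) hsort - - hspec hdom
  · have := hdom 1
    simp at this
    omega
  have hmax : ∀ c ∈ a :: t, c ≤ a := by
    simpa using (List.pairwise_cons.mp hsort).1
  have hodd : Odd a := hspec.odd_of_forall_le List.mem_cons_self hmax
  have hhead : 2 * n ≤ a := by simpa using hdom 1
  have hhead' : 2 * n < a := hhead.lt_of_ne fun h =>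
    Nat.not_odd_iff_even.mpr (even_two_mul n) (h ▸ hodd)
  exact hdom.cons_cons hsum (by simpa using hhead')
end

section
/- Let g be a finite-dimensional Lie algebra over a field of characteristic zero with invariant symmetric bilinear form κ, s ∈ g ad-diagonalizable with rational eigenvalues, u ∈ g^s_{−2}, and let n = g^s_{≥2} + (g^s_1 ∩ g_u). Then the linear functional ℓ_u : n → F given by ℓ_u(x) = κ(u, x) vanishes on [n, n]; i.e., ℓ_u is a Lie algebra character of the nilpotent Lie algebra n. -/
/-!
Grade `g` by the eigenvalues of `ad s`. Since `u` has degree `-2`, the bracket `⁅u, X⁆` of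
`u` with `X ∈ n` lies in degrees `≥ 0`: the part of `X` of degree `≥ 2` is moved down by `2`,
and the part of degree `1` commutes with `u`. Invariance of `κ` gives
`κ u ⁅X, Y⁆ = κ ⁅u, X⁆ Y`, and this vanishes because `ad s` is skew for `κ`, so eigenspaces
`g^s_a` and `g^s_b` are `κ`-orthogonal unless `a + b = 0`, while `Y ∈ n` has degrees `≥ 1`.
-/

/-- The `r`-eigenspace `g^s_r` of `ad(s)` on a Lie algebra. -/
def adEigenspace (F : Type*) [Field F] (L : Type*) [LieRing L] [LieAlgebra F L]
    (s : L) (r : F) : Submodule F L :=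
  Module.End.eigenspace (LieAlgebra.ad F L s) r

/-- `g^s_{≥c}` -/
def adEigenspaceGE (F : Type*) [Field F] (L : Type*) [LieRing L] [LieAlgebra F L]
    (s : L) (c : ℚ) : Submodule F L :=
  ⨆ r : {r : ℚ // c ≤ r}, adEigenspace F L s ((r : ℚ) : F)

namespace adEigenspace

variable {F : Type*} [Field F] {L : Type*} [LieRing L] [LieAlgebra F L]

lemma mem_iff {s x : L} {r : F} : x ∈ adEigenspace F L s r ↔ ⁅s, x⁆ = r • x := by
  rw [adEigenspace, Module.End.mem_eigenspace_iff, LieAlgebra.ad_apply]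

lemma lie_mem {s x y : L} {a b : F} (hx : x ∈ adEigenspace F L s a)
    (hy : y ∈ adEigenspace F L s b) : ⁅x, y⁆ ∈ adEigenspace F L s (a + b) := by
  rw [mem_iff] at *
  rw [leibniz_lie, hx, hy, smul_lie, lie_smul, add_smul]

lemma bilinForm_eq_zero_of_add_ne_zero (κ : LinearMap.BilinForm F L)
    (hinv : ∀ x y z : L, κ ⁅x, y⁆ z = κ x ⁅y, z⁆)
    {s x y : L} {a b : F} (hab : a + b ≠ 0)
    (hx : x ∈ adEigenspace F L s a) (hy : y ∈ adEigenspace F L s b) :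
    κ x y = 0 := by
  rw [mem_iff] at hx hy
  have hxs : ⁅x, s⁆ = -(a • x) := by rw [← lie_skew, hx]
  have h := hinv x s y
  rw [hy, hxs] at h
  simp only [map_neg, map_smul, LinearMap.neg_apply, LinearMap.smul_apply, smul_eq_mul] at h
  have h2 : (a + b) * κ x y = 0 := by linear_combination -h
  exact (mul_eq_zero.mp h2).resolve_left hab

end adEigenspace

namespace adEigenspaceGE

variable {F : Type*} [Field F] {L : Type*} [LieRing L] [LieAlgebra F L]

lemma adEigenspace_le {s : L} {c r : ℚ} (h : c ≤ r) :
    adEigenspace F L s (r : F) ≤ adEigenspaceGE F L s c :=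
  le_iSup_of_le (ι := {r : ℚ // c ≤ r}) ⟨r, h⟩ le_rfl

lemma antitone (s : L) : Antitone (adEigenspaceGE F L s) :=
  fun _ _ h => iSup_le fun r => adEigenspace_le (h.trans r.2)

lemma lie_mem [CharZero F] {s u x : L} {a c : ℚ} (hu : u ∈ adEigenspace F L s (a : F))
    (hx : x ∈ adEigenspaceGE F L s c) : ⁅u, x⁆ ∈ adEigenspaceGE F L s (a + c) := by
  suffices adEigenspaceGE F L s c ≤ (adEigenspaceGE F L s (a + c)).comap (LieAlgebra.ad F L u) from
    this hx
  refine iSup_le fun r y hy => ?_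
  have hb := adEigenspace.lie_mem hu hy
  rw [← Rat.cast_add] at hb
  exact adEigenspace_le (by linarith [r.2]) hb

lemma bilinForm_eq_zero_of_add_pos [CharZero F] (κ : LinearMap.BilinForm F L)
    (hinv : ∀ x y z : L, κ ⁅x, y⁆ z = κ x ⁅y, z⁆)
    {s x y : L} {a b : ℚ} (hab : 0 < a + b)
    (hx : x ∈ adEigenspaceGE F L s a) (hy : y ∈ adEigenspaceGE F L s b) :
    κ x y = 0 := by
  have hx' : ∀ r : ℚ, b ≤ r → ∀ y ∈ adEigenspace F L s (r : F), κ x y = 0 := by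
    intro r hr y hy
    refine (iSup_le fun a' z hz => ?_ : adEigenspaceGE F L s a ≤ LinearMap.ker (κ.flip y)) hx
    refine adEigenspace.bilinForm_eq_zero_of_add_ne_zero κ hinv ?_ hz hy
    rw [← Rat.cast_add]
    exact Rat.cast_ne_zero.mpr (by linarith [a'.2])
  exact (iSup_le fun r y hy => hx' r r.2 y hy : adEigenspaceGE F L s b ≤ LinearMap.ker (κ x)) hy

end adEigenspaceGE

theorem stmt11_general (F : Type*) [Field F] [CharZero F]
    (L : Type*) [LieRing L] [LieAlgebra F L]
    (κ : LinearMap.BilinForm F L)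
    (hinv : ∀ x y z : L, κ ⁅x, y⁆ z = κ x ⁅y, z⁆)
    (s u : L) (hu : u ∈ adEigenspace F L s (((-2 : ℚ) : F))) :
    ∀ X ∈ (⨆ r : {r : ℚ // 2 ≤ r}, adEigenspace F L s (((r : ℚ) : F))) ⊔
        (adEigenspace F L s (((1 : ℚ) : F)) ⊓
          LinearMap.ker (LieAlgebra.ad F L u)),
      ∀ Y ∈ (⨆ r : {r : ℚ // 2 ≤ r}, adEigenspace F L s (((r : ℚ) : F))) ⊔
        (adEigenspace F L s (((1 : ℚ) : F)) ⊓
          LinearMap.ker (LieAlgebra.ad F L u)),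
        κ u ⁅X, Y⁆ = 0 := by
  change ∀ X ∈ adEigenspaceGE F L s 2 ⊔ _, ∀ Y ∈ adEigenspaceGE F L s 2 ⊔ _, _
  intro X hX Y hY
  have hY1 : Y ∈ adEigenspaceGE F L s 1 :=
    sup_le (adEigenspaceGE.antitone s (by norm_num : (1 : ℚ) ≤ 2))
      (inf_le_left.trans (adEigenspaceGE.adEigenspace_le le_rfl)) hY
  have huX : ⁅u, X⁆ ∈ adEigenspaceGE F L s 0 := by
    refine (sup_le (fun x hx => ?_) (inf_le_right.trans (LinearMap.ker_le_comap _)) :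
      _ ≤ (adEigenspaceGE F L s 0).comap (LieAlgebra.ad F L u)) hX
    simpa using adEigenspaceGE.lie_mem hu hx
  rw [← hinv]
  exact adEigenspaceGE.bilinForm_eq_zero_of_add_pos κ hinv (by norm_num) huX hY1

/-- With `κ` an invariant symmetric bilinear form, `s ∈ g`
ad-diagonalizable with rational eigenvalues, `u ∈ g^s_{−2}` and
`n = g^s_{≥2} + (g^s_1 ∩ g_u)`, the functional `ℓ_u(x) = κ(u,x)` vanishes on
`[n, n]`; i.e. `ℓ_u` is a Lie algebra character of `n`. -/
theorem stmt11 (F : Type*) [Field F] [CharZero F]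
    (L : Type*) [LieRing L] [LieAlgebra F L] [FiniteDimensional F L]
    (κ : LinearMap.BilinForm F L)
    (hsymm : ∀ x y : L, κ x y = κ y x)
    (hinv : ∀ x y z : L, κ ⁅x, y⁆ z = κ x ⁅y, z⁆)
    (s u : L) (hu : u ∈ adEigenspace F L s (((-2 : ℚ) : F))) :
    ∀ X ∈ (⨆ r : {r : ℚ // 2 ≤ r}, adEigenspace F L s (((r : ℚ) : F))) ⊔
        (adEigenspace F L s (((1 : ℚ) : F)) ⊓
          LinearMap.ker (LieAlgebra.ad F L u)),
      ∀ Y ∈ (⨆ r : {r : ℚ // 2 ≤ r}, adEigenspace F L s (((r : ℚ) : F))) ⊔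
        (adEigenspace F L s (((1 : ℚ) : F)) ⊓
          LinearMap.ker (LieAlgebra.ad F L u)),
        κ u ⁅X, Y⁆ = 0 :=
  stmt11_general F L κ hinv s u hu
end
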